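/- Let S be a positive semidomain (a subsemiring of the real numbers all of whose elements are nonnegative). If the additive monoid (S, +) has at least one atom, then every multiplicative unit of S (every u ∈ S such that u·v = 1 for some v ∈ S) is an atom of the additive monoid (S, +). -/

import Mathlib

/-! If `a` is an atom and `u * v = 1`, then `a = u * (v * a)`, so a splitting `u = x + y` in `S`
multiplies to a splitting `a = x * (v * a) + y * (v * a)`, and no zero divisors finish it. -/

def IsAddAtomIn {R : Type*} [Semiring R] (S : Subsemiring R) (a : R) : Prop :=
  a ≠ 0 ∧ ∀ x ∈ S, ∀ y ∈ S, a = x + y → x = 0 ∨ y = 0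

theorem IsAddAtomIn.of_mul_right {R : Type*} [Semiring R] [NoZeroDivisors R] {S : Subsemiring R}
    {u w : R} (hw : w ∈ S) (h : IsAddAtomIn S (u * w)) : IsAddAtomIn S u := by
  obtain ⟨huw, hsplit⟩ := h
  have hw0 : w ≠ 0 := right_ne_zero_of_mul huw
  refine ⟨left_ne_zero_of_mul huw, fun x hx y hy hxy => ?_⟩
  have hsum : u * w = x * w + y * w := by rw [hxy, add_mul]
  rcases hsplit _ (S.mul_mem hx hw) _ (S.mul_mem hy hw) hsum with h | h
  · exact Or.inl ((mul_eq_zero.mp h).resolve_right hw0)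
  · exact Or.inr ((mul_eq_zero.mp h).resolve_right hw0)

theorem units_are_additive_atoms_general (S : Subsemiring ℝ)
    (hex : ∃ a ∈ S, a ≠ 0 ∧ ∀ x ∈ S, ∀ y ∈ S, a = x + y → x = 0 ∨ y = 0)
    (u : ℝ) (hunit : ∃ v ∈ S, u * v = 1) :
    u ≠ 0 ∧ ∀ x ∈ S, ∀ y ∈ S, u = x + y → x = 0 ∨ y = 0 := by
  obtain ⟨v, hv, huv⟩ := hunit
  obtain ⟨a, ha, hatom⟩ := hex
  have hatom' : IsAddAtomIn S (u * (v * a)) := by rwa [← mul_assoc, huv, one_mul]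
  exact hatom'.of_mul_right (S.mul_mem hv ha)

/-- In a positive semidomain (a subsemiring of `ℝ` all of whose elements are
nonnegative), if the additive monoid has at least one atom, then every
multiplicative unit of the semidomain is an additive atom. -/
theorem units_are_additive_atoms (S : Subsemiring ℝ) (hS : ∀ x ∈ S, (0 : ℝ) ≤ x)
    (hex : ∃ a ∈ S, a ≠ 0 ∧ ∀ x ∈ S, ∀ y ∈ S, a = x + y → x = 0 ∨ y = 0)
    (u : ℝ) (hu : u ∈ S) (hunit : ∃ v ∈ S, u * v = 1) :
    u ≠ 0 ∧ ∀ x ∈ S, ∀ y ∈ S, u = x + y → x = 0 ∨ y = 0 :=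
  units_are_additive_atoms_general S hex u hunit
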